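/- arXiv:math/0507417 — 2 statements merged into one kernel-verified Lean document; each statement's English description precedes it below -/
import Mathlib

section
/- Let k ≥ 1 and α ∈ (0,1). Under the setup with exchangeability (E), the stepdown rule D — which, with X_{r_1} ≥ ⋯ ≥ X_{r_k} the ordered coordinates, rejects exactly H_{r_1}, …, H_{r_j} where j is the largest index such that X_{r_i} ≥ f_{k−i+1} for all 1 ≤ i ≤ j — controls the FWER at level α: for every θ ∈ ℝ^k, P_θ{x : D rejects some H_i with θ_i ≤ 0} ≤ α. -/
/-!
If the stepdown rule rejects a true hypothesis, look at the first true hypothesis in the order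
of decreasing observations, at rank `q`. Only the `k - m` false hypotheses (`m` the number of
true ones) can precede it, so `q ≤ k - m`, and it is rejected, so its observation is at least
`f (k - q) ≥ f m`. The constants `f j` increase because they are defined by equal tail
probabilities of maxima over growing sets of coordinates and the density is positive. Hence a
false rejection forces `max_{θ i ≤ 0} X_i ≥ f m`. By (M) the probability of this upper set only
grows when the parameter is raised to `θ ⊔ 0`, by (C) it then equals its value at `θ = 0`, and by
exchangeability it is `P₀ {max (X_1, …, X_m) ≥ f m}`, which is `α` since ties are null.
-/

open MeasureTheory Filter Set
open scoped ENNReal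

noncomputable section

/-- A decision rule `D` assigns to each data point the set of rejected hypotheses.
It is *monotone* if raising the coordinates of rejected hypotheses while strictly
lowering those of accepted ones does not change the decision. -/
def MonotoneRule {k : ℕ} (D : (Fin k → ℝ) → Finset (Fin k)) : Prop :=
  ∀ x y : Fin k → ℝ, (∀ i ∈ D x, x i ≤ y i) → (∀ i ∉ D x, y i < x i) → D y = D x

/-- Measurability of a decision rule. -/
def MeasurableRule {k : ℕ} (D : (Fin k → ℝ) → Finset (Fin k)) : Prop :=
  ∀ S : Finset (Fin k), MeasurableSet {x | D x = S}

/-- Strong control of the familywise error rate at level `α`. -/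
def ControlsFWER {k : ℕ} (P : (Fin k → ℝ) → Measure (Fin k → ℝ))
    (D : (Fin k → ℝ) → Finset (Fin k)) (α : ℝ) : Prop :=
  ∀ θ : Fin k → ℝ, P θ {x | ∃ i ∈ D x, θ i ≤ 0} ≤ ENNReal.ofReal α

/-- The distributional assumptions of the paper: each `P θ` is a probability measure with a
strictly positive density; (M) monotonicity in the parameter for signed upper sets; (C) the law
of any subcollection of coordinates depends only on the corresponding parameters; (L) each
coordinate tends to `±∞` in probability as its parameter does. -/
def Setup {k : ℕ} (P : (Fin k → ℝ) → Measure (Fin k → ℝ)) : Prop :=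
  (∀ θ, IsProbabilityMeasure (P θ)) ∧
  (∀ θ, ∃ f : (Fin k → ℝ) → ℝ≥0∞, Measurable f ∧ (∀ x, 0 < f x ∧ f x ≠ ⊤) ∧
    P θ = MeasureTheory.volume.withDensity f) ∧
  (∀ δ : Fin k → ℝ, (∀ i, δ i = 1 ∨ δ i = -1) →
    ∀ θ γ : Fin k → ℝ, (∀ i, δ i * θ i ≤ δ i * γ i) →
    ∀ M : Set (Fin k → ℝ), MeasurableSet M → IsUpperSet M →
    P θ {x | (fun i => δ i * x i) ∈ M} ≤ P γ {x | (fun i => δ i * x i) ∈ M}) ∧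
  (∀ (I : Set (Fin k)) (θ γ : Fin k → ℝ), (∀ i ∈ I, θ i = γ i) →
    Measure.map I.restrict (P θ) = Measure.map I.restrict (P γ)) ∧
  (∀ (θ : Fin k → ℝ) (i : Fin k) (c : ℝ),
    Tendsto (fun t => P (Function.update θ i t) {x | x i ≤ c}) atTop (nhds 0) ∧
    Tendsto (fun t => P (Function.update θ i t) {x | c ≤ x i}) atBot (nhds 0))

/-- Exchangeability of the law of `X` under any parameter with equal coordinates. -/
def Exch {k : ℕ} (P : (Fin k → ℝ) → Measure (Fin k → ℝ)) : Prop :=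
  ∀ (t : ℝ) (π : Equiv.Perm (Fin k)),
    Measure.map (fun x => x ∘ π) (P (fun _ => t)) = P (fun _ => t)

/-- The `i`-th largest coordinate of `x` (`i` is 0-based). -/
def ordDesc {k : ℕ} (x : Fin k → ℝ) (i : Fin k) : ℝ := x (Tuple.sort x i.rev)


/-- The number of hypotheses rejected by the stepdown procedure with critical constants
`f j` (`c_{k,i} = f (k-i+1)`): the largest `j` such that the `i`-th largest observation is at
least `f (k-i+1)` for all `i ≤ j` (indices `0`-based below, so the condition reads
`f (k - i') ≤ ordDesc x i'`). -/
def sdNumRej {k : ℕ} (f : ℕ → ℝ) (x : Fin k → ℝ) : ℕ :=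
  (Finset.univ.filter (fun i : Fin k => ∀ i' ≤ i, f (k - (i' : ℕ)) ≤ ordDesc x i')).card

/-- The stepdown rule with critical constants `f`: it rejects the hypotheses corresponding to
the `sdNumRej f x` largest observations. -/
def sdRule {k : ℕ} (f : ℕ → ℝ) (x : Fin k → ℝ) : Finset (Fin k) :=
  (Finset.univ.filter (fun i : Fin k => (i : ℕ) < sdNumRej f x)).image
    (fun i => Tuple.sort x i.rev)

/-- `sdDset k j f` is the event `D_{k,j}` that the stepdown procedure rejects at least `j`
hypotheses: the `i`-th largest observation is `≥ f (k-i+1)` for each of the top `j` positions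
(`0`-based `i`). -/
def sdDset (k j : ℕ) (f : ℕ → ℝ) : Set (Fin k → ℝ) :=
  {x | ∀ i : Fin k, (i : ℕ) < j → f (k - (i : ℕ)) ≤ ordDesc x i}

lemma Fin.lt_card_filter_iff_of_antitone {k : ℕ} {Q : Fin k → Prop} [DecidablePred Q]
    (hQ : Antitone Q) (r : Fin k) : (r : ℕ) < (Finset.univ.filter Q).card ↔ Q r := by
  constructor
  · intro h
    by_contra hr
    have hsub : Finset.univ.filter Q ⊆ Finset.Iio r := fun i hi =>
      Finset.mem_Iio.2 (lt_of_not_ge fun hri => hr (hQ hri (Finset.mem_filter.1 hi).2))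
    have := Finset.card_le_card hsub
    rw [Fin.card_Iio] at this
    omega
  · intro h
    have hsub : Finset.Iic r ⊆ Finset.univ.filter Q := fun i hi =>
      Finset.mem_filter.2 ⟨Finset.mem_univ i, hQ (Finset.mem_Iic.1 hi) h⟩
    have := Finset.card_le_card hsub
    rw [Fin.card_Iic] at this
    omega

lemma Tuple.lt_card_filter_le_iff {k : ℕ} {α : Type*} [LinearOrder α] (g : Fin k → α) (c : α)
    (j : Fin k) :
    (j : ℕ) < (Finset.univ.filter fun i => g i ≤ c).card ↔ g (Tuple.sort g j) ≤ c := by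
  have hcard : (Finset.univ.filter fun j => g (Tuple.sort g j) ≤ c).card =
      (Finset.univ.filter fun i => g i ≤ c).card := by
    rw [← Finset.card_map (Tuple.sort g).toEmbedding]
    congr 1
    ext i
    simp
  rw [← hcard]
  exact Fin.lt_card_filter_iff_of_antitone
    (fun i j hij hj => (Tuple.monotone_sort g hij).trans hj) j

lemma Fin.min'_add_card_le {k : ℕ} (T : Finset (Fin k)) (hT : T.Nonempty) :
    (T.min' hT : ℕ) + T.card ≤ k := by
  have := Finset.card_le_card fun i (hi : i ∈ T) =>
    Finset.mem_Ici (a := T.min' hT).2 (T.min'_le i hi)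
  rw [Fin.card_Ici] at this
  have := (T.min' hT).isLt
  omega

lemma mem_sdRule_iff {k : ℕ} {f : ℕ → ℝ} {x : Fin k → ℝ} {i : Fin k} :
    i ∈ sdRule f x ↔ ∀ r ≤ ((Tuple.sort x).symm i).rev, f (k - r) ≤ ordDesc x r := by
  have hpos : i ∈ sdRule f x ↔ (((Tuple.sort x).symm i).rev : ℕ) < sdNumRej f x := by
    simp only [sdRule, Finset.mem_image, Finset.mem_filter, Finset.mem_univ, true_and]
    constructor
    · rintro ⟨r, hr, rfl⟩
      simpa using hr
    · exact fun h => ⟨_, h, by simp⟩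
  rw [hpos]
  exact Fin.lt_card_filter_iff_of_antitone (fun r r' hrr' hr' q hq => hr' q (hq.trans hrr')) _

lemma exists_le_of_mem_sdRule {k : ℕ} {f : ℕ → ℝ} (hf : MonotoneOn f (Set.Icc 1 k))
    {x : Fin k → ℝ} {S : Finset (Fin k)} {i : Fin k} (hi : i ∈ sdRule f x) (hiS : i ∈ S) :
    ∃ j ∈ S, f S.card ≤ x j := by
  -- `e r` is the index of the `r`-th largest observation; `q` is the first rank held by `S`
  set e : Equiv.Perm (Fin k) := Fin.revPerm.trans (Tuple.sort x)
  set T := S.map e.symm.toEmbedding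
  have hiT : e.symm i ∈ T := Finset.mem_map_equiv.2 (by simpa using hiS)
  set q := T.min' ⟨_, hiT⟩
  have hqS : e q ∈ S := by simpa [T] using T.min'_mem ⟨_, hiT⟩
  have hq_le : q ≤ ((Tuple.sort x).symm i).rev := T.min'_le _ hiT
  have hcard : (q : ℕ) + S.card ≤ k := by simpa [T] using Fin.min'_add_card_le T ⟨_, hiT⟩
  have hS : 1 ≤ S.card := Finset.card_pos.2 ⟨i, hiS⟩
  refine ⟨e q, hqS, ?_⟩
  calc f S.card ≤ f (k - q) := hf ⟨hS, by omega⟩ ⟨by omega, by omega⟩ (by omega)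
    _ ≤ ordDesc x q := mem_sdRule_iff.1 hi q hq_le

lemma measurableSet_exists_le_apply {ι : Type*} [Countable ι] (s : Set ι) (c : ℝ) :
    MeasurableSet {x : ι → ℝ | ∃ i ∈ s, c ≤ x i} := by
  measurability

lemma Tuple.image_sort_setOf_lt_card {k : ℕ} (θ : Fin k → ℝ) (c : ℝ) :
    Tuple.sort θ '' {j | (j : ℕ) < (Finset.univ.filter fun i => θ i ≤ c).card} =
      {i | θ i ≤ c} := by
  ext i
  simp [Equiv.image_eq_preimage_symm, Tuple.lt_card_filter_le_iff]

lemma measure_exists_le_image_perm {k : ℕ} {μ : Measure (Fin k → ℝ)} {π : Equiv.Perm (Fin k)}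
    (hπ : μ.map (fun x => x ∘ π) = μ) (s : Set (Fin k)) (c : ℝ) :
    μ {x | ∃ i ∈ π '' s, c ≤ x i} = μ {x | ∃ i ∈ s, c ≤ x i} := by
  conv_rhs => rw [← hπ]
  rw [Measure.map_apply (by fun_prop) (measurableSet_exists_le_apply s c)]
  congr 1
  ext x
  simp only [Set.mem_preimage, Set.mem_ofPred_eq, Set.mem_image, Function.comp_apply]
  exact ⟨fun ⟨_, ⟨j, hj, rfl⟩, h⟩ => ⟨j, hj, h⟩, fun ⟨j, hj, h⟩ => ⟨_, ⟨j, hj, rfl⟩, h⟩⟩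

lemma measure_exists_le_le_exists_lt {ι : Type*} [Fintype ι] {μ : Measure (ι → ℝ)}
    (hμ : μ ≪ volume) (s : Set ι) (c : ℝ) :
    μ {x | ∃ i ∈ s, c ≤ x i} ≤ μ {x | ∃ i ∈ s, c < x i} := by
  have hsub : {x : ι → ℝ | ∃ i ∈ s, c ≤ x i} ⊆
      {x | ∃ i ∈ s, c < x i} ∪ ⋃ i, {x | x i = c} := by
    rintro x ⟨i, hi, hx⟩
    rcases hx.lt_or_eq with h | h
    · exact Or.inl ⟨i, hi, h⟩
    · exact Or.inr (Set.mem_iUnion.2 ⟨i, h.symm⟩)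
  have hnull : μ (⋃ i, {x : ι → ℝ | x i = c}) = 0 :=
    hμ <| measure_iUnion_null fun i => by
      rw [volume_pi]
      exact Measure.pi_hyperplane (fun _ : ι => (volume : Measure ℝ)) i c
  calc μ {x | ∃ i ∈ s, c ≤ x i}
      ≤ μ {x | ∃ i ∈ s, c < x i} + μ (⋃ i, {x : ι → ℝ | x i = c}) :=
        (measure_mono hsub).trans (measure_union_le _ _)
    _ = μ {x | ∃ i ∈ s, c < x i} := by rw [hnull, add_zero]

lemma monotoneOn_of_measure_exists_lt_eq {k : ℕ} {μ : Measure (Fin k → ℝ)} [IsFiniteMeasure μ]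
    (hμ : volume ≪ μ) {f : ℕ → ℝ} {p : ℝ≥0∞}
    (hf : ∀ j ∈ Set.Icc 1 k, μ {x | ∃ i : Fin k, (i : ℕ) < j ∧ f j < x i} = p) :
    MonotoneOn f (Set.Icc 1 k) := by
  intro a ha b hb hab
  by_contra! hlt
  set A : ℕ → Set (Fin k → ℝ) := fun j => {x | ∃ i : Fin k, (i : ℕ) < j ∧ f j < x i}
  -- a box of positive measure lying in `A b` but not in `A a`
  set B : Set (Fin k → ℝ) := Set.univ.pi fun _ => Set.Ioo (f b) (f a)
  have hB_meas : MeasurableSet B := MeasurableSet.univ_pi fun _ => measurableSet_Ioo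
  have hB_pos : μ B ≠ 0 := fun h =>
    ((isOpen_set_pi Set.finite_univ fun _ _ => isOpen_Ioo).measure_pos volume
      (Set.univ_pi_nonempty_iff.2 fun _ => Set.nonempty_Ioo.2 hlt)).ne' (hμ h)
  have hdisj : Disjoint (A a) B := Set.disjoint_left.2 fun x ⟨i, _, hx⟩ hxB =>
    (hxB i (Set.mem_univ i)).2.not_gt hx
  have hsub : A a ∪ B ⊆ A b := by
    rintro x (⟨i, hi, hx⟩ | hxB)
    · exact ⟨i, hi.trans_le hab, hlt.trans hx⟩
    · exact ⟨⟨0, by grind⟩, by grind, (hxB _ (Set.mem_univ _)).1⟩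
  have hle : μ (A a) + μ B ≤ μ (A a) + 0 := by
    rw [← measure_union hdisj hB_meas, add_zero, hf a ha, ← hf b hb]
    exact measure_mono hsub
  exact hB_pos (nonpos_iff_eq_zero.1 ((ENNReal.add_le_add_iff_left (measure_ne_top μ _)).1 hle))

namespace Setup

variable {k : ℕ} {P : (Fin k → ℝ) → Measure (Fin k → ℝ)}

lemma absolutelyContinuous_volume (hP : Setup P) (θ : Fin k → ℝ) : P θ ≪ volume := by
  obtain ⟨d, -, -, hd⟩ := hP.2.1 θ
  exact hd ▸ withDensity_absolutelyContinuous _ _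

lemma volume_absolutelyContinuous (hP : Setup P) (θ : Fin k → ℝ) : volume ≪ P θ := by
  obtain ⟨d, hd_meas, hd_pos, hd⟩ := hP.2.1 θ
  exact hd ▸ withDensity_absolutelyContinuous' hd_meas.aemeasurable
    (Eventually.of_forall fun x => (hd_pos x).1.ne')

lemma measure_mono_of_le (hP : Setup P) {θ γ : Fin k → ℝ} (hθγ : θ ≤ γ)
    {M : Set (Fin k → ℝ)} (hM : MeasurableSet M) (hM_upper : IsUpperSet M) :
    P θ M ≤ P γ M := by
  have h := hP.2.2.1 (fun _ => 1) (fun _ => Or.inl rfl) θ γ (fun i => by simpa using hθγ i)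
    M hM hM_upper
  simp only [one_mul] at h
  exact h

lemma measure_exists_le_congr (hP : Setup P) {s : Set (Fin k)} {θ γ : Fin k → ℝ}
    (hθγ : ∀ i ∈ s, θ i = γ i) (c : ℝ) :
    P θ {x | ∃ i ∈ s, c ≤ x i} = P γ {x | ∃ i ∈ s, c ≤ x i} := by
  have hlaw : (P θ).map s.domRestrict = (P γ).map s.domRestrict := hP.2.2.2.1 s θ γ hθγ
  have hpre : {x : Fin k → ℝ | ∃ i ∈ s, c ≤ x i} =
      s.domRestrict ⁻¹' {y | ∃ i ∈ Set.univ, c ≤ y i} := by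
    ext x
    simp
  have hT := measurableSet_exists_le_apply (Set.univ : Set s) c
  have hrestrict : Measurable (s.domRestrict : (Fin k → ℝ) → s → ℝ) :=
    measurable_pi_lambda _ fun i => measurable_pi_apply i.1
  rw [hpre, ← Measure.map_apply hrestrict hT, ← Measure.map_apply hrestrict hT, hlaw]

lemma measure_exists_le_le (hP : Setup P) (hE : Exch P) (θ : Fin k → ℝ) (c : ℝ) :
    P θ {x | ∃ i, θ i ≤ 0 ∧ c ≤ x i} ≤
      P (fun _ => 0) {x | ∃ i : Fin k,
        (i : ℕ) < (Finset.univ.filter fun i => θ i ≤ 0).card ∧ c < x i} := by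
  set m := (Finset.univ.filter fun i => θ i ≤ 0).card
  calc P θ {x | ∃ i ∈ {i | θ i ≤ 0}, c ≤ x i}
      ≤ P (θ ⊔ 0) {x | ∃ i ∈ {i | θ i ≤ 0}, c ≤ x i} :=
        hP.measure_mono_of_le le_sup_left (measurableSet_exists_le_apply _ c)
          fun x y hxy ⟨i, hi, hx⟩ => ⟨i, hi, hx.trans (hxy i)⟩
    _ = P (fun _ => 0) {x | ∃ i ∈ {i | θ i ≤ 0}, c ≤ x i} :=
        hP.measure_exists_le_congr (fun i hi => sup_eq_right.2 hi) c
    _ = P (fun _ => 0) {x | ∃ i ∈ {j : Fin k | (j : ℕ) < m}, c ≤ x i} := by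
        rw [← Tuple.image_sort_setOf_lt_card θ 0, measure_exists_le_image_perm (hE 0 _)]
    _ ≤ P (fun _ => 0) {x | ∃ i ∈ {j : Fin k | (j : ℕ) < m}, c < x i} :=
        measure_exists_le_le_exists_lt (hP.absolutelyContinuous_volume _) _ c

end Setup

theorem stmt_7_general
    (k : ℕ)
    (P : (Fin k → ℝ) → Measure (Fin k → ℝ)) (hP : Setup P) (hE : Exch P)
    (α : ℝ)
    (f : ℕ → ℝ)
    (hf : ∀ j : ℕ, 1 ≤ j → j ≤ k →
      P (fun _ => (0 : ℝ)) {x | ∃ i : Fin k, (i : ℕ) < j ∧ f j < x i} = ENNReal.ofReal α) :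
    ∀ θ : Fin k → ℝ, P θ {x | ∃ i ∈ sdRule f x, θ i ≤ 0} ≤ ENNReal.ofReal α := by
  intro θ
  have := hP.1 fun _ => 0
  have hf_mono : MonotoneOn f (Set.Icc 1 k) :=
    monotoneOn_of_measure_exists_lt_eq (hP.volume_absolutelyContinuous _)
      fun j hj => hf j hj.1 hj.2
  set m := (Finset.univ.filter fun i => θ i ≤ 0).card
  have hsub : {x | ∃ i ∈ sdRule f x, θ i ≤ 0} ⊆ {x | ∃ i, θ i ≤ 0 ∧ f m ≤ x i} := by
    rintro x ⟨i, hi, hθi⟩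
    obtain ⟨j, hj, hx⟩ := exists_le_of_mem_sdRule hf_mono hi
      (S := Finset.univ.filter fun i => θ i ≤ 0) (by simpa using hθi)
    exact ⟨j, by simpa using hj, hx⟩
  calc P θ {x | ∃ i ∈ sdRule f x, θ i ≤ 0}
      ≤ P θ {x | ∃ i, θ i ≤ 0 ∧ f m ≤ x i} := measure_mono hsub
    _ ≤ P (fun _ => 0) {x | ∃ i : Fin k, (i : ℕ) < m ∧ f m < x i} :=
        hP.measure_exists_le_le hE θ (f m)
    _ ≤ ENNReal.ofReal α := by
        rcases Nat.eq_zero_or_pos m with hm | hm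
        · simp [hm]
        · exact (hf m hm (Finset.card_le_univ _ |>.trans_eq (Fintype.card_fin k))).le

/-- Lemma 3.1(i): under the distributional assumptions and exchangeability, the stepdown rule
with critical constants `f j` (determined by `P₀^{(j)}{max(X_1,…,X_j) > f j} = α`) controls the
FWER at level `α`. -/
theorem stmt_7
    (k : ℕ) (hk : 1 ≤ k)
    (P : (Fin k → ℝ) → Measure (Fin k → ℝ)) (hP : Setup P) (hE : Exch P)
    (α : ℝ) (hα : α ∈ Set.Ioo (0 : ℝ) 1)
    (f : ℕ → ℝ)
    (hf : ∀ j : ℕ, 1 ≤ j → j ≤ k →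
      P (fun _ => (0 : ℝ)) {x | ∃ i : Fin k, (i : ℕ) < j ∧ f j < x i} = ENNReal.ofReal α) :
    ∀ θ : Fin k → ℝ, P θ {x | ∃ i ∈ sdRule f x, θ i ≤ 0} ≤ ENNReal.ofReal α :=
  stmt_7_general k P hP hE α f hf
end
end

section
/- Let k ≥ 2 and adopt the setup below. Let R ⊆ ℝ^k be a Borel-measurable upper set, and fix θ_1, …, θ_{k−1} ∈ ℝ. Let Q_{θ_1,…,θ_{k−1}} denote the law of (X_1, …, X_{k−1}) under P_θ (which by (C) does not depend on θ_k). Then lim_{t → −∞} P_{(θ_1, …, θ_{k−1}, t)}(R) = Q_{θ_1,…,θ_{k−1}}(⋂_{z ∈ ℝ} R^z), where R^z = {(x_1, …, x_{k−1}) : (x_1, …, x_{k−1}, z) ∈ R}. -/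
open MeasureTheory Filter Set
open scoped ENNReal

noncomputable section

/-
The slices `R^z` shrink as `z` decreases, so `Q (R^z) ↓ Q (⋂ R^z)` as `z → -∞`. Since `R` is
an upper set, a point of `R` whose last coordinate lies below `z` already has its first
`k - 1` coordinates in `R^z`; hence `Q (⋂ R^z) ≤ P_t R ≤ Q (R^z) + P_t {z ≤ X_k}` for every `t`,
because by (C) the law of `(X_1, …, X_{k-1})` under `P_t` is `Q`. By (L) the last term vanishes
as `t → -∞`, and letting then `z → -∞` squeezes `P_t R` to `Q (⋂ R^z)`.
-/

open Topology

section Slices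

variable {α : Type*} {n : ℕ}

theorem Fin.snoc_le_snoc [Preorder α] {x y : Fin n → α} {z w : α} (hxy : x ≤ y) (hzw : z ≤ w) :
    (Fin.snoc x z : Fin (n + 1) → α) ≤ Fin.snoc y w := by
  intro i
  induction i using Fin.lastCases with
  | last => simpa using hzw
  | cast j => simpa using hxy j

theorem measurable_snoc_const [MeasurableSpace α] (z : α) :
    Measurable (fun y : Fin n → α => (Fin.snoc y z : Fin (n + 1) → α)) := by
  refine measurable_pi_lambda _ fun i => ?_
  induction i using Fin.lastCases with
  | last => simp
  | cast j => simpa using measurable_pi_apply j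

theorem measurable_fin_init [MeasurableSpace α] :
    Measurable (Fin.init : (Fin (n + 1) → α) → Fin n → α) :=
  measurable_pi_lambda _ fun _ => measurable_pi_apply _

def lastSlice (R : Set (Fin (n + 1) → α)) (z : α) : Set (Fin n → α) :=
  {y | Fin.snoc y z ∈ R}

theorem IsUpperSet.monotone_lastSlice [Preorder α] {R : Set (Fin (n + 1) → α)}
    (hR : IsUpperSet R) : Monotone (lastSlice R) :=
  fun _ _ hzw _ hy => hR (Fin.snoc_le_snoc le_rfl hzw) hy

theorem MeasurableSet.lastSlice [MeasurableSpace α] {R : Set (Fin (n + 1) → α)}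
    (hR : MeasurableSet R) (z : α) : MeasurableSet (lastSlice R z) :=
  measurable_snoc_const z hR

theorem init_preimage_iInter_lastSlice_subset (R : Set (Fin (n + 1) → α)) :
    Fin.init ⁻¹' ⋂ z, lastSlice R z ⊆ R := fun x hx => by
  simpa [lastSlice, Fin.snoc_init_self] using mem_iInter.1 hx (x (Fin.last n))

theorem IsUpperSet.subset_init_preimage_lastSlice_union [LinearOrder α]
    {R : Set (Fin (n + 1) → α)} (hR : IsUpperSet R) (z : α) :
    R ⊆ Fin.init ⁻¹' lastSlice R z ∪ {x | z ≤ x (Fin.last n)} := by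
  intro x hx
  rcases le_or_gt z (x (Fin.last n)) with hz | hz
  · exact Or.inr hz
  · refine Or.inl (hR ?_ hx)
    conv_lhs => rw [← Fin.snoc_init_self x]
    exact Fin.snoc_le_snoc le_rfl hz.le

theorem map_init_snoc_eq_of_marginal [MeasurableSpace α]
    {P : (Fin (n + 1) → α) → Measure (Fin (n + 1) → α)}
    (hC : ∀ (I : Set (Fin (n + 1))) (θ γ : Fin (n + 1) → α), (∀ i ∈ I, θ i = γ i) →
      Measure.map I.domRestrict (P θ) = Measure.map I.domRestrict (P γ))
    (θ : Fin n → α) (s t : α) :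
    (P (Fin.snoc θ s)).map Fin.init = (P (Fin.snoc θ t)).map Fin.init := by
  set I : Set (Fin (n + 1)) := range Fin.castSucc
  set g : (I → α) → Fin n → α := fun h i => h ⟨i.castSucc, mem_range_self i⟩
  have hg : Measurable g := measurable_pi_lambda _ fun _ => measurable_pi_apply _
  have hI : Measurable (I.domRestrict : (Fin (n + 1) → α) → I → α) :=
    measurable_pi_lambda _ fun _ => measurable_pi_apply _
  have hinit : (Fin.init : (Fin (n + 1) → α) → Fin n → α) = g ∘ I.domRestrict := rfl
  rw [hinit, ← Measure.map_map hg hI, ← Measure.map_map hg hI, hC I _ _ ?_]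
  rintro _ ⟨j, rfl⟩
  simp

end Slices

section Limit

variable {n : ℕ} {R : Set (Fin (n + 1) → ℝ)}

theorem measurableSet_iInter_lastSlice (hRmeas : MeasurableSet R) (hR : IsUpperSet R) :
    MeasurableSet (⋂ z, lastSlice R z) := by
  rw [← hR.monotone_lastSlice.iInter_comp_tendsto_atBot
    (tendsto_neg_atTop_atBot.comp tendsto_natCast_atTop_atTop)]
  exact .iInter fun m => hRmeas.lastSlice _

theorem tendsto_measure_iInter_lastSlice {ι : Type*} {l : Filter ι}
    {μ : ι → Measure (Fin (n + 1) → ℝ)} {Q : Measure (Fin n → ℝ)} [IsFiniteMeasure Q]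
    (hmarg : ∀ t, (μ t).map Fin.init = Q)
    (htail : ∀ z, Tendsto (fun t => μ t {x | z ≤ x (Fin.last n)}) l (𝓝 0))
    (hRmeas : MeasurableSet R) (hR : IsUpperSet R) :
    Tendsto (fun t => μ t R) l (𝓝 (Q (⋂ z, lastSlice R z))) := by
  have hA := measurableSet_iInter_lastSlice hRmeas hR
  have hlower : ∀ t, Q (⋂ z, lastSlice R z) ≤ μ t R := fun t => by
    rw [← hmarg t, Measure.map_apply measurable_fin_init hA]
    exact measure_mono (init_preimage_iInter_lastSlice_subset R)
  have hupper : ∀ z t, μ t R ≤ Q (lastSlice R z) + μ t {x | z ≤ x (Fin.last n)} := fun z t =>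
    calc μ t R ≤ μ t (Fin.init ⁻¹' lastSlice R z ∪ {x | z ≤ x (Fin.last n)}) :=
          measure_mono (hR.subset_init_preimage_lastSlice_union z)
      _ ≤ μ t (Fin.init ⁻¹' lastSlice R z) + μ t {x | z ≤ x (Fin.last n)} :=
          measure_union_le _ _
      _ = Q (lastSlice R z) + μ t {x | z ≤ x (Fin.last n)} := by
          rw [← hmarg t, Measure.map_apply measurable_fin_init (hRmeas.lastSlice z)]
  have hslices : Tendsto (fun z => Q (lastSlice R z)) atBot (𝓝 (Q (⋂ z, lastSlice R z))) :=
    tendsto_measure_iInter_atBot (fun z => (hRmeas.lastSlice z).nullMeasurableSet)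
      hR.monotone_lastSlice ⟨0, measure_ne_top _ _⟩
  refine tendsto_order.2 ⟨fun a ha => .of_forall fun t => ha.trans_le (hlower t), fun a ha => ?_⟩
  obtain ⟨z, hz⟩ := (hslices.eventually (gt_mem_nhds ha)).exists
  have hbound := tendsto_const_nhds (x := Q (lastSlice R z)) |>.add (htail z)
  rw [add_zero] at hbound
  filter_upwards [hbound.eventually (gt_mem_nhds hz)] with t ht using (hupper z t).trans_lt ht

end Limit

theorem stmt_18_general (n : ℕ)
    (P : (Fin (n + 1) → ℝ) → Measure (Fin (n + 1) → ℝ)) (hP : Setup P)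
    (R : Set (Fin (n + 1) → ℝ)) (hRmeas : MeasurableSet R) (hR : IsUpperSet R)
    (θ : Fin n → ℝ)
    (Q : Measure (Fin n → ℝ))
    (hQ : Q = Measure.map (fun x : Fin (n + 1) → ℝ => fun i : Fin n => x i.castSucc)
      (P (Fin.snoc θ 0))) :
    Filter.Tendsto (fun t : ℝ => P (Fin.snoc θ t) R) Filter.atBot
      (nhds (Q (⋂ z : ℝ, {y : Fin n → ℝ | Fin.snoc y z ∈ R}))) := by
  obtain ⟨hprob, -, -, hC, hL⟩ := hP
  have hmarg : ∀ t, (P (Fin.snoc θ t)).map Fin.init = Q := fun t =>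
    hQ ▸ map_init_snoc_eq_of_marginal hC θ t 0
  have : IsProbabilityMeasure Q :=
    hQ ▸ Measure.isProbabilityMeasure_map measurable_fin_init.aemeasurable
  refine tendsto_measure_iInter_lastSlice hmarg (fun z => ?_) hRmeas hR
  simpa [Fin.update_snoc_last] using (hL (Fin.snoc θ 0) (Fin.last n) z).2

/-- Lemma 6.2, equation (42): for a measurable upper set `R ⊆ ℝ^k` (`k = n + 1 ≥ 2`) and fixed
`θ₁, …, θ_{k-1}`, the probability of `R` tends, as the last parameter tends to `-∞`, to the
probability under the law `Q` of the first `k - 1` coordinates of the intersection of the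
slices `R^z = {y | (y, z) ∈ R}`. -/
theorem stmt_18 (n : ℕ) (hn : 1 ≤ n)
    (P : (Fin (n + 1) → ℝ) → Measure (Fin (n + 1) → ℝ)) (hP : Setup P)
    (R : Set (Fin (n + 1) → ℝ)) (hRmeas : MeasurableSet R) (hR : IsUpperSet R)
    (θ : Fin n → ℝ)
    (Q : Measure (Fin n → ℝ))
    (hQ : Q = Measure.map (fun x : Fin (n + 1) → ℝ => fun i : Fin n => x i.castSucc)
      (P (Fin.snoc θ 0))) :
    Filter.Tendsto (fun t : ℝ => P (Fin.snoc θ t) R) Filter.atBot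
      (nhds (Q (⋂ z : ℝ, {y : Fin n → ℝ | Fin.snoc y z ∈ R}))) :=
  stmt_18_general n P hP R hRmeas hR θ Q hQ
end
end
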